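/- arXiv:1508.01842 — 4 statements merged into one kernel-verified Lean document; each statement's English description precedes it below -/
import Mathlib

section
/- Let d, m, k, p, n be positive integers with 2k < p ≤ d and 2k < d. Let A ∈ ℝ^{d×m} satisfy Spark(A) > 2k, let P ∈ ℝ^{m×m} be a permutation matrix and D ∈ ℝ^{m×m} an invertible diagonal matrix, and set A' = A P D. Let Φ_1,…,Φ_n ∈ ℝ^{p×d} be independent random matrices with i.i.d. N(0,1/d) entries. Then with probability one the following holds: for all X, X' ∈ ℝ^{m×n} each of whose columns has at most k nonzero entries, if Φ_j A' x'_j = Φ_j A x_j for all j ∈ {1,…,n}, then A' X' = A X. -/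
/-!
Put `y = P D x'`, so that `A' x' = A y` with `y` again `k`-sparse. Then `Φⱼ A (y - xⱼ) = 0` with
`y - xⱼ` being `2k`-sparse, so it suffices that almost surely `Spark (Φⱼ A) > 2k`. For a set `T` of
at most `2k < p` columns, the columns of `(Φⱼ A)_T` are independent iff its rows `A_Tᵀ φ` span
`ℝ^T`. The rows `φ` of `Φⱼ` are iid with a law that charges no proper subspace, and `A_Tᵀ` maps onto
`ℝ^T` because `Spark A > 2k`; so the `A_Tᵀ φ` are iid with a law charging no proper subspace of
`ℝ^T`. Such vectors are almost surely in general position (add them one at a time and use Fubini),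
hence `|T|` of them already span `ℝ^T`.
-/

open MeasureTheory ProbabilityTheory Module Submodule Set Filter
open scoped NNReal Finset Matrix

theorem card_filter_sub_ne_zero_le {ι R : Type*} [Fintype ι] [AddGroup R] [DecidableEq R]
    (x y : ι → R) :
    #{i | (x - y) i ≠ 0} ≤ #{i | x i ≠ 0} + #{i | y i ≠ 0} := by
  classical
  refine (Finset.card_le_card fun i => ?_).trans (Finset.card_union_le _ _)
  simp only [Finset.mem_filter, Finset.mem_univ, true_and, Finset.mem_union, Pi.sub_apply]
  intro h
  by_contra! hi
  exact h (by rw [hi.1, hi.2, sub_zero])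

theorem Matrix.card_filter_toPEquiv_mul_diagonal_mulVec_ne_zero_le {ι R : Type*} [Fintype ι]
    [DecidableEq ι] [Semiring R] [DecidableEq R] (σ : Equiv.Perm ι) (D x : ι → R) :
    #{i | (((σ.toPEquiv.toMatrix : Matrix ι ι R) * diagonal D) *ᵥ x) i ≠ 0} ≤ #{i | x i ≠ 0} := by
  rw [← mulVec_mulVec, PEquiv.toMatrix_toPEquiv_mulVec]
  refine Finset.card_le_card_of_injOn σ (fun i hi => ?_) σ.injective.injOn
  simp only [Finset.coe_filter, Finset.mem_univ, true_and, mem_ofPred_eq, Function.comp_apply,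
    mulVec_diagonal] at hi ⊢
  exact right_ne_zero_of_mul hi

namespace Matrix

variable {ι κ K : Type*} [Field K]

/-- `M.SparkGT s` says `Spark M > s`: every `s` columns of `M` are linearly independent. -/
def SparkGT (M : Matrix ι κ K) (s : ℕ) : Prop :=
  ∀ T : Finset κ, #T ≤ s → LinearIndependent K (fun j : T => fun i => M i j)

theorem linearIndependent_col_iff_span_row_eq_top [Finite ι] [Fintype κ] (M : Matrix ι κ K) :
    LinearIndependent K M.col ↔ span K (range M.row) = ⊤ := by
  rw [linearIndependent_iff_card_eq_finrank_span, Set.finrank, ← rank_eq_finrank_span_cols,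
    rank_eq_finrank_span_row]
  constructor
  · intro h
    exact eq_top_of_finrank_eq (by rw [finrank_fintype_fun_eq_card]; exact h.symm)
  · intro h
    rw [h, finrank_top, finrank_fintype_fun_eq_card]

variable [Fintype κ] [DecidableEq K]

theorem SparkGT.eq_zero_of_mulVec_eq_zero {M : Matrix ι κ K} {s : ℕ} (hM : M.SparkGT s)
    {z : κ → K} (hz : #{j | z j ≠ 0} ≤ s) (h : M *ᵥ z = 0) : z = 0 := by
  have hT := Fintype.linearIndependent_iff.1 (hM _ hz) (fun j => z j) ?_
  · funext j
    by_contra hj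
    exact hj (hT ⟨j, by simpa using hj⟩)
  · funext i
    have hi := congrFun h i
    simp only [mulVec, dotProduct, Pi.zero_apply] at hi
    simp only [Finset.sum_apply, Pi.smul_apply, smul_eq_mul, Pi.zero_apply]
    rw [Finset.sum_coe_sort _ (fun j => z j * M i j),
      Finset.sum_filter_of_ne fun j _ hj => left_ne_zero_of_mul hj]
    simpa only [mul_comm] using hi

theorem SparkGT.mulVec_eq_of_mul_mulVec_eq {ι' : Type*} [Fintype ι] {Φ : Matrix ι' ι K}
    {A : Matrix ι κ K} {s : ℕ} (h : (Φ * A).SparkGT s) {x y : κ → K}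
    (hxy : #{i | x i ≠ 0} + #{i | y i ≠ 0} ≤ s) (heq : Φ *ᵥ (A *ᵥ x) = Φ *ᵥ (A *ᵥ y)) :
    A *ᵥ x = A *ᵥ y := by
  have hz := h.eq_zero_of_mulVec_eq_zero ((card_filter_sub_ne_zero_le x y).trans hxy)
    (by rw [← mulVec_mulVec, mulVec_sub, mulVec_sub, heq, sub_self])
  rw [sub_eq_zero.1 hz]

end Matrix

section GeneralPosition

variable {K F ι : Type*} [Field K] [AddCommGroup F] [Module K F]

variable (K) in
def InGeneralPosition (v : ι → F) : Prop :=
  ∀ s : Set ι, s.ncard ≤ finrank K F → LinearIndepOn K v s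

theorem InGeneralPosition.span_eq_top [Finite ι] [FiniteDimensional K F] {v : ι → F}
    (hv : InGeneralPosition K v) (hcard : finrank K F ≤ Nat.card ι) : span K (range v) = ⊤ := by
  obtain ⟨s, -, hs⟩ := exists_subset_card_eq (s := (univ : Set ι)) (n := finrank K F)
    (by rwa [ncard_univ])
  have : Fintype s := Fintype.ofFinite s
  have hspan := (hv s hs.le).span_eq_top_of_card_eq_finrank'
    (by rw [← hs, ← Nat.card_coe_set_eq, Nat.card_eq_fintype_card])
  exact eq_top_mono (span_mono (range_subset_iff.2 fun i => mem_range_self _)) hspan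

theorem InGeneralPosition.cons {q : ℕ} {v : Fin q → F} (hv : InGeneralPosition K v) {x : F}
    (hx : ∀ s : Set (Fin q), s.ncard < finrank K F → x ∉ span K (v '' s)) :
    InGeneralPosition K (Fin.cons x v : Fin (q + 1) → F) := by
  intro s hs
  set s' : Set (Fin q) := Fin.succ ⁻¹' s
  have hs' : Fin.succ '' s' = s \ {0} := by
    rw [image_preimage_eq_inter_range, Fin.range_succ, sdiff_eq]
  have hcard : s'.ncard = (s \ {0}).ncard := by
    rw [← hs', ncard_image_of_injective _ (Fin.succ_injective q)]
  have hsucc : LinearIndepOn K (Fin.cons x v : Fin (q + 1) → F) (s \ {0}) := by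
    rw [← hs']
    exact LinearIndepOn.image_of_comp _ _ (hv s' (hcard ▸ (ncard_sdiff_singleton_le s 0).trans hs))
  by_cases h0 : (0 : Fin (q + 1)) ∈ s
  · rw [← insert_sdiff_self_of_mem h0] at hs ⊢
    rw [ncard_insert_of_notMem (by simp)] at hs
    refine (linearIndepOn_insert (by simp)).2 ⟨hsucc, ?_⟩
    rw [← hs', image_image]
    simpa using hx s' (by omega)
  · rwa [sdiff_singleton_eq_self h0] at hsucc

theorem isOpen_setOf_inGeneralPosition {F : Type*} [NormedAddCommGroup F] [NormedSpace ℝ F]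
    [Finite ι] : IsOpen {v : ι → F | InGeneralPosition ℝ v} := by
  simp only [InGeneralPosition, ofPred_forall]
  refine isOpen_iInter_of_finite fun s => isOpen_iInter_of_finite fun _ => ?_
  exact isOpen_setOfPred_linearIndependent.preimage (by fun_prop)

end GeneralPosition

theorem MeasureTheory.Measure.AbsolutelyContinuous.pi_fin {n : ℕ} {α : Fin n → Type*}
    [∀ i, MeasurableSpace (α i)] {μ ν : ∀ i, Measure (α i)} [∀ i, SigmaFinite (μ i)]
    [∀ i, SigmaFinite (ν i)] (h : ∀ i, μ i ≪ ν i) : Measure.pi μ ≪ Measure.pi ν := by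
  induction n with
  | zero => rw [Measure.pi_of_empty μ, Measure.pi_of_empty ν]
  | succ n ih =>
    rw [← (measurePreserving_piFinSuccAbove μ 0).symm.map_eq,
      ← (measurePreserving_piFinSuccAbove ν 0).symm.map_eq]
    exact ((h 0).prod (ih fun i => h _)).map (MeasurableEquiv.measurable _)

theorem pi_gaussianReal_apply_submodule_eq_zero {n : ℕ} {v : ℝ≥0} (hv : v ≠ 0)
    (W : Submodule ℝ (Fin n → ℝ)) (hW : W ≠ ⊤) :
    Measure.pi (fun _ : Fin n => gaussianReal 0 v) W = 0 :=
  Measure.AbsolutelyContinuous.pi_fin (fun _ => gaussianReal_absolutelyContinuous 0 hv)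
    (Measure.addHaar_submodule volume W hW)

section NullOnProperSubmodules

variable {E F : Type*} [NormedAddCommGroup E] [NormedSpace ℝ E] [FiniteDimensional ℝ E]
  [MeasurableSpace E] [BorelSpace E] [NormedAddCommGroup F] [NormedSpace ℝ F]
  [FiniteDimensional ℝ F] [MeasurableSpace F] [BorelSpace F]

theorem map_apply_submodule_eq_zero {μ : Measure E}
    (hμ : ∀ W : Submodule ℝ E, W ≠ ⊤ → μ W = 0) {L : E →ₗ[ℝ] F} (hL : Function.Surjective L)
    (W : Submodule ℝ F) (hW : W ≠ ⊤) : μ.map L W = 0 := by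
  rw [Measure.map_apply L.continuous_of_finiteDimensional.measurable
    W.closed_of_finiteDimensional.measurableSet]
  refine hμ (W.comap L) fun h => hW ?_
  rw [eq_top_iff, ← LinearMap.range_eq_top.2 hL, LinearMap.range_le_iff_comap, h]

theorem ae_inGeneralPosition {ν : Measure F} [SigmaFinite ν]
    (hν : ∀ W : Submodule ℝ F, W ≠ ⊤ → ν W = 0) (q : ℕ) :
    ∀ᵐ v ∂(Measure.pi fun _ : Fin q => ν), InGeneralPosition ℝ v := by
  induction q with
  | zero => exact ae_of_all _ fun v s _ => (eq_empty_of_isEmpty s).symm ▸ linearIndepOn_empty ℝ v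
  | succ q ih =>
    have hmeas : MeasurableSet {v : Fin (q + 1) → F | InGeneralPosition ℝ v} :=
      isOpen_setOf_inGeneralPosition.measurableSet
    set e := MeasurableEquiv.piFinSuccAbove (fun _ : Fin (q + 1) => F) 0
    have he : ∀ x v, e.symm (x, v) = Fin.cons x v := fun x v => Fin.insertNth_zero' x v
    rw [← (measurePreserving_piFinSuccAbove (fun _ => ν) 0).symm.map_eq,
      ae_map_iff e.symm.measurable.aemeasurable hmeas,
      Measure.ae_prod_iff_ae_ae (p := fun z => InGeneralPosition ℝ (e.symm z))
        (e.symm.measurable hmeas),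
      Measure.ae_ae_comm (p := fun x v => InGeneralPosition ℝ (e.symm (x, v)))
        (e.symm.measurable hmeas)]
    filter_upwards [ih] with v hv
    have hx : ∀ᵐ x ∂ν, ∀ s : Set (Fin q), s.ncard < finrank ℝ F → x ∉ span ℝ (v '' s) := by
      refine ae_all_iff.2 fun s => ?_
      by_cases hs : s.ncard < finrank ℝ F
      · have hW : span ℝ (v '' s) ≠ ⊤ := by
          have : Fintype (v '' s) := Fintype.ofFinite _
          refine (span_lt_top_of_card_lt_finrank ?_).ne
          rw [← ncard_eq_toFinset_card']
          exact (ncard_image_le (toFinite s)).trans_lt hs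
        filter_upwards [measure_eq_zero_iff_ae_notMem.1 (hν _ hW)] with x hx _
        exact hx
      · exact ae_of_all _ fun x h => absurd h hs
    filter_upwards [hx] with x hx
    simpa [he] using hv.cons hx

theorem ae_span_eq_top {μ : Measure E} [IsFiniteMeasure μ]
    (hμ : ∀ W : Submodule ℝ E, W ≠ ⊤ → μ W = 0) {L : E →ₗ[ℝ] F} (hL : Function.Surjective L)
    {q : ℕ} (hq : finrank ℝ F ≤ q) :
    ∀ᵐ v ∂(Measure.pi fun _ : Fin q => μ), span ℝ (range fun i => L (v i)) = ⊤ := by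
  have hLm : Measurable L := L.continuous_of_finiteDimensional.measurable
  have hmap : (Measure.pi fun _ : Fin q => μ).map (fun v i => L (v i)) =
      Measure.pi fun _ => μ.map L := Measure.pi_map_pi fun _ => hLm.aemeasurable
  have hgp := ae_inGeneralPosition (map_apply_submodule_eq_zero hμ hL) q
  rw [← hmap] at hgp
  filter_upwards [ae_of_ae_map
    (measurable_pi_lambda _ fun i => hLm.comp (measurable_pi_apply i)).aemeasurable hgp] with v hv
  exact hv.span_eq_top (by simpa using hq)

end NullOnProperSubmodules

theorem ae_sparkGT_of_mul {d p : ℕ} {κ : Type*} [Countable κ] {ρ : Measure (Fin d → ℝ)}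
    [IsFiniteMeasure ρ] (hρ : ∀ W : Submodule ℝ (Fin d → ℝ), W ≠ ⊤ → ρ W = 0)
    {A : Matrix (Fin d) κ ℝ} {s : ℕ} (hA : A.SparkGT s) (hsp : s ≤ p) :
    ∀ᵐ φ ∂(Measure.pi fun _ : Fin p => ρ), (Matrix.of φ * A).SparkGT s := by
  refine ae_all_iff.2 fun T => ae_all_iff.2 fun hT => ?_
  set L := (A.submatrix id ((↑) : T → κ)).vecMulLinear
  have hL : Function.Surjective L := by
    rw [← LinearMap.range_eq_top, range_vecMulLinear,
      ← Matrix.linearIndependent_col_iff_span_row_eq_top]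
    exact hA T hT
  filter_upwards [ae_span_eq_top hρ hL (by simpa using hT.trans hsp)] with φ hφ
  show LinearIndependent ℝ ((Matrix.of φ * A).submatrix id ((↑) : T → κ)).col
  have hrow : ((Matrix.of φ * A).submatrix id ((↑) : T → κ)).row = fun i => L (φ i) := by
    ext i j
    simp [L, Matrix.mul_apply, Matrix.vecMul, dotProduct]
  rw [Matrix.linearIndependent_col_iff_span_row_eq_top, hrow]
  exact hφ

open Classical in
theorem stmt5_general (d m k p n : ℕ)
    (hd : 0 < d)
    (hkp : 2 * k < p)
    (A : Matrix (Fin d) (Fin m) ℝ)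
    (hA : ∀ T : Finset (Fin m), T.card ≤ 2 * k →
      LinearIndependent ℝ (fun j : T => fun i => A i (j : Fin m)))
    (P : Equiv.Perm (Fin m)) (D : Fin m → ℝ)
    (A' : Matrix (Fin d) (Fin m) ℝ)
    (hA' : A' = A * ((Equiv.toPEquiv P).toMatrix : Matrix (Fin m) (Fin m) ℝ) * Matrix.diagonal D) :
    (Measure.pi fun _ : Fin n => Measure.pi fun _ : Fin p =>
        Measure.pi fun _ : Fin d => gaussianReal 0 (d : ℝ≥0)⁻¹)
      {Φ : Fin n → Fin p → Fin d → ℝ |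
        ∀ X X' : Matrix (Fin m) (Fin n) ℝ,
          (∀ j, (Finset.univ.filter fun i => X i j ≠ 0).card ≤ k) →
          (∀ j, (Finset.univ.filter fun i => X' i j ≠ 0).card ≤ k) →
          (∀ j : Fin n, (Matrix.of (Φ j)).mulVec (A'.mulVec fun i => X' i j)
              = (Matrix.of (Φ j)).mulVec (A.mulVec fun i => X i j)) →
          A' * X' = A * X} = 1 := by
  set ρ : Measure (Fin d → ℝ) := Measure.pi fun _ => gaussianReal 0 (d : ℝ≥0)⁻¹
  have hrows := ae_sparkGT_of_mul
    (pi_gaussianReal_apply_submodule_eq_zero (inv_ne_zero (Nat.cast_ne_zero.2 hd.ne'))) hA hkp.le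
  have hall : ∀ᵐ Φ ∂(Measure.pi fun _ : Fin n => Measure.pi fun _ : Fin p => ρ),
      ∀ j, (Matrix.of (Φ j) * A).SparkGT (2 * k) :=
    ae_all_iff.2 fun j =>
      (Measure.quasiMeasurePreserving_eval (fun _ : Fin n => Measure.pi fun _ : Fin p => ρ) j).ae
        hrows
  refine (measure_congr (ae_eq_univ.2 ?_)).trans measure_univ
  filter_upwards [hall] with Φ hΦ X X' hX hX' hmeas
  ext i j
  set B : Matrix (Fin m) (Fin m) ℝ := P.toPEquiv.toMatrix * Matrix.diagonal D
  have hB : A' *ᵥ (fun i => X' i j) = A *ᵥ (B *ᵥ fun i => X' i j) := by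
    rw [Matrix.mulVec_mulVec, ← Matrix.mul_assoc, hA']
  have hsparse : #{i | (B *ᵥ fun i => X' i j) i ≠ 0} ≤ k :=
    (Matrix.card_filter_toPEquiv_mul_diagonal_mulVec_ne_zero_le P D _).trans (hX' j)
  have hcol := (hΦ j).mulVec_eq_of_mul_mulVec_eq (x := B *ᵥ fun i => X' i j) (y := fun i => X i j)
    (by have := hX j; omega) (by rw [← hB]; exact hmeas j)
  exact congrFun (hB.trans hcol) i

open Classical in
/-- Lemma 1 of the paper: if `A' = A P D` for a permutation matrix `P`
and an invertible diagonal matrix `D`, then with probability one over the independent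
`N(0,1/d)` Gaussian sampling matrices `Φ_1, …, Φ_n`, any pair of matrices `X, X'`
with at most `k`-sparse columns producing equal measurements satisfies `A'X' = AX`. -/
theorem stmt5 (d m k p n : ℕ)
    (hd : 0 < d) (hm : 0 < m) (hk : 0 < k) (hp : 0 < p) (hn : 0 < n)
    (hkp : 2 * k < p) (hpd : p ≤ d) (hkd : 2 * k < d)
    (A : Matrix (Fin d) (Fin m) ℝ)
    (hA : ∀ T : Finset (Fin m), T.card ≤ 2 * k →
      LinearIndependent ℝ (fun j : T => fun i => A i (j : Fin m)))
    (P : Equiv.Perm (Fin m)) (D : Fin m → ℝ) (hD : ∀ i, D i ≠ 0)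
    (A' : Matrix (Fin d) (Fin m) ℝ)
    (hA' : A' = A * ((Equiv.toPEquiv P).toMatrix : Matrix (Fin m) (Fin m) ℝ) * Matrix.diagonal D) :
    (Measure.pi fun _ : Fin n => Measure.pi fun _ : Fin p =>
        Measure.pi fun _ : Fin d => gaussianReal 0 (d : ℝ≥0)⁻¹)
      {Φ : Fin n → Fin p → Fin d → ℝ |
        ∀ X X' : Matrix (Fin m) (Fin n) ℝ,
          (∀ j, (Finset.univ.filter fun i => X i j ≠ 0).card ≤ k) →
          (∀ j, (Finset.univ.filter fun i => X' i j ≠ 0).card ≤ k) →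
          (∀ j : Fin n, (Matrix.of (Φ j)).mulVec (A'.mulVec fun i => X' i j)
              = (Matrix.of (Φ j)).mulVec (A.mulVec fun i => X i j)) →
          A' * X' = A * X} = 1 :=
  stmt5_general d m k p n hd hkp A hA P D A' hA'
end

section
/- Let A, A' ∈ ℝ^{d×m} and let k be a positive integer with 2k ≤ m and Spark(A) > 2k. Let 𝒮 denote the collection of all k-element subsets of {1,…,m}. If there exists a mapping π : 𝒮 → 𝒮 such that span{A_S} = span{A'_{π(S)}} for every S ∈ 𝒮 (where A_S is the submatrix of the columns of A indexed by S), then there exist a permutation matrix P ∈ ℝ^{m×m} and an invertible diagonal matrix D ∈ ℝ^{m×m} such that A' = A P D. -/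
/-!
Spark(A) > 2k makes S ↦ span{A_S} injective on sets of size ≤ k and compatible with
intersections: span{A_S} ∩ span{A_T} = span{A_{S ∩ T}} whenever |S ∪ T| ≤ 2k. Hence π is
injective, so bijective, and every column a'_u lies in span{A_{E(u)}}, where E(u) is the
intersection of all k-sets S with u ∈ π(S). If t ∈ E(u) ∩ E(u') with u ≠ u', then π maps the
C(m-1, k) k-sets avoiding t injectively into the C(m-2, k) k-sets avoiding u and u', which is
impossible. So the E(u) are pairwise disjoint; they are nonempty because a'_u ≠ 0, hence they
are singletons {τ(u)}, and a'_u is a nonzero multiple of a_{τ(u)}.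
-/

open Finset Submodule Function

section LinearAlgebra

variable {K V ι : Type*}

theorem LinearIndepOn.span_image_inter [Semiring K] [AddCommMonoid V] [Module K V] {v : ι → V}
    {s t : Set ι} (h : LinearIndepOn K v (s ∪ t)) :
    span K (v '' (s ∩ t)) = span K (v '' s) ⊓ span K (v '' t) := by
  refine le_antisymm (le_inf (span_mono (Set.image_mono Set.inter_subset_left))
    (span_mono (Set.image_mono Set.inter_subset_right))) ?_
  rintro x ⟨hs, ht⟩
  rw [SetLike.mem_coe, Finsupp.span_image_eq_map_linearCombination] at hs ht
  obtain ⟨f, hf, rfl⟩ := hs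
  obtain ⟨g, hg, hgf⟩ := ht
  obtain rfl := linearIndepOn_iffₛ.1 h g (Finsupp.supported_mono Set.subset_union_right hg)
    f (Finsupp.supported_mono Set.subset_union_left hf) hgf
  rw [Finsupp.span_image_eq_map_linearCombination, Finsupp.supported_inter]
  exact ⟨g, ⟨hf, hg⟩, rfl⟩

variable [DivisionRing K] [AddCommGroup V] [Module K V]

theorem LinearIndepOn.subset_of_span_image_le {v : ι → V} {s t : Set ι}
    (h : LinearIndepOn K v (s ∪ t)) (hst : span K (v '' s) ≤ span K (v '' t)) : s ⊆ t := fun _ hx ↦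
  (h.mono Set.subset_union_right).mem_span_iff.1 (hst (subset_span (Set.mem_image_of_mem v hx)))
    (h.mono (Set.insert_subset (Or.inl hx) Set.subset_union_right))

theorem LinearIndepOn.finrank_span_image {v : ι → V} {s : Finset ι} (h : LinearIndepOn K v s) :
    Module.finrank K (span K (v '' s)) = s.card := by
  classical
  rw [← coe_image, finrank_span_finset_eq_card (by simpa using h.id_image),
    card_image_of_injOn h.injOn]

theorem linearIndepOn_of_finrank_span_image_eq_card {v : ι → V} {s : Finset ι}
    (h : Module.finrank K (span K (v '' s)) = s.card) : LinearIndepOn K v s := by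
  rw [LinearIndepOn, linearIndependent_iff_card_eq_finrank_span, Set.finrank,
    ← Set.image_eq_range]
  simpa using h.symm

end LinearAlgebra

section Spark

variable {K V ι : Type*} [DivisionRing K] [AddCommGroup V] [Module K V] [Fintype ι]
  [DecidableEq ι] {k : ℕ}

theorem mem_span_image_inf {v : ι → V} (hv : ∀ T : Finset ι, T.card ≤ 2 * k → LinearIndepOn K v T)
    {α : Type*} {𝒯 : Finset α} (h𝒯 : 𝒯.Nonempty) {f : α → Finset ι}
    (hf : ∀ a ∈ 𝒯, (f a).card ≤ k) {x : V} (hx : ∀ a ∈ 𝒯, x ∈ span K (v '' f a)) :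
    x ∈ span K (v '' ↑(𝒯.inf f)) := by
  induction h𝒯 using Finset.Nonempty.cons_induction with
  | singleton a => simpa using hx a (mem_singleton_self a)
  | cons a 𝒯 ha h𝒯 ih =>
    obtain ⟨b, hb⟩ := h𝒯
    have hcard : (𝒯.inf f).card ≤ k :=
      (card_le_card (inf_le hb)).trans (hf b (mem_cons_of_mem hb))
    have hindep : LinearIndepOn K v (↑(f a) ∪ ↑(𝒯.inf f)) := by
      rw [← coe_union]
      have := hf a (mem_cons_self a 𝒯)
      exact hv _ ((card_union_le _ _).trans (by omega))
    rw [inf_cons, inf_eq_inter, coe_inter, hindep.span_image_inter]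
    exact ⟨hx a (mem_cons_self a 𝒯), ih (fun b hb ↦ hf b (mem_cons_of_mem hb))
      (fun b hb ↦ hx b (mem_cons_of_mem hb))⟩

theorem card_powersetCard_sdiff_pair_lt (hk : 0 < k) (hkι : k < Fintype.card ι) (t : ι)
    {u u' : ι} (huu' : u ≠ u') :
    (powersetCard k (univ \ {u, u'})).card < (powersetCard k (univ.erase t)).card := by
  obtain ⟨j, rfl⟩ : ∃ j, k = j + 1 := ⟨k - 1, by omega⟩
  rw [card_powersetCard, card_powersetCard, card_sdiff_of_subset (subset_univ _), card_pair huu',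
    card_erase_of_mem (mem_univ t), card_univ]
  obtain ⟨n, hn⟩ : ∃ n, Fintype.card ι = n + 2 := ⟨Fintype.card ι - 2, by omega⟩
  rw [hn, Nat.add_sub_cancel, show n + 2 - 1 = n + 1 by omega, Nat.choose_succ_succ']
  have := Nat.choose_pos (show j ≤ n by omega)
  omega

theorem eq_of_forall_mem_imp_mem (hk : 0 < k) (hkι : k < Fintype.card ι)
    {π : {S : Finset ι // S.card = k} → {S : Finset ι // S.card = k}} (hπ : Injective π)
    {t u u' : ι} (hu : ∀ S, u ∈ (π S).1 → t ∈ S.1) (hu' : ∀ S, u' ∈ (π S).1 → t ∈ S.1) :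
    u = u' := by
  by_contra huu'
  refine (card_powersetCard_sdiff_pair_lt hk hkι t huu').not_ge ?_
  rw [← filter_true_of_mem (s := powersetCard k (univ.erase t)) (p := (·.card = k))
      (fun S hS ↦ (mem_powersetCard.1 hS).2),
    ← filter_true_of_mem (s := powersetCard k (univ \ {u, u'})) (p := (·.card = k))
      (fun S hS ↦ (mem_powersetCard.1 hS).2), ← card_subtype, ← card_subtype]
  refine card_le_card_of_injOn π (fun S hS ↦ ?_) hπ.injOn
  rw [mem_coe, mem_subtype, mem_powersetCard] at hS ⊢
  simp only [subset_erase, subset_univ, true_and, subset_sdiff, disjoint_insert_right,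
    disjoint_singleton_right] at hS ⊢
  exact ⟨⟨fun h ↦ hS.1 (hu S h), fun h ↦ hS.1 (hu' S h)⟩, (π S).2⟩

end Spark

section SpanCorrespondence

variable {K V ι : Type*} [DivisionRing K] [AddCommGroup V] [Module K V] {k : ℕ} {v w : ι → V}
  {π : {S : Finset ι // S.card = k} → {S : Finset ι // S.card = k}}

def preimageInter [Fintype ι] [DecidableEq ι]
    (π : {S : Finset ι // S.card = k} → {S : Finset ι // S.card = k}) (u : ι) : Finset ι :=
  ({S | u ∈ (π S).1} : Finset _).inf Subtype.val

theorem mem_preimageInter [Fintype ι] [DecidableEq ι] {u t : ι} :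
    t ∈ preimageInter π u ↔ ∀ S, u ∈ (π S).1 → t ∈ S.1 := by
  simp [preimageInter, Finset.mem_inf]

theorem injective_of_span_image_eq [DecidableEq ι]
    (hv : ∀ T : Finset ι, T.card ≤ 2 * k → LinearIndepOn K v T)
    (hπ : ∀ S, span K (v '' S.1) = span K (w '' (π S).1)) : Injective π := by
  intro S S' h
  have hindep : LinearIndepOn K v (↑S.1 ∪ ↑S'.1) := by
    rw [← coe_union]
    exact hv _ ((card_union_le _ _).trans (by rw [S.2, S'.2]; omega))
  have hspan : span K (v '' S.1) = span K (v '' S'.1) := by rw [hπ, hπ, h]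
  exact Subtype.ext (coe_injective (le_antisymm (hindep.subset_of_span_image_le hspan.le)
    ((Set.union_comm _ _ ▸ hindep).subset_of_span_image_le hspan.ge)))

theorem linearIndepOn_image_of_span_image_eq
    (hv : ∀ T : Finset ι, T.card ≤ 2 * k → LinearIndepOn K v T)
    (hπ : ∀ S, span K (v '' S.1) = span K (w '' (π S).1)) (S : {S : Finset ι // S.card = k}) :
    LinearIndepOn K w (π S).1 := by
  refine linearIndepOn_of_finrank_span_image_eq_card ?_
  rw [← hπ, (hv S.1 (by omega)).finrank_span_image, S.2, (π S).2]

theorem mem_span_image_preimageInter [Fintype ι] [DecidableEq ι]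
    (hv : ∀ T : Finset ι, T.card ≤ 2 * k → LinearIndepOn K v T)
    (hπ : ∀ S, span K (v '' S.1) = span K (w '' (π S).1)) {u : ι} (hu : ∃ S, u ∈ (π S).1) :
    w u ∈ span K (v '' preimageInter π u) := by
  obtain ⟨S, hS⟩ := hu
  refine mem_span_image_inf hv ⟨S, by simpa using hS⟩ (fun S _ ↦ S.2.le) fun S' hS' ↦ ?_
  rw [hπ]
  exact subset_span (Set.mem_image_of_mem w (by simpa using hS'))

end SpanCorrespondence

theorem exists_perm_smul_eq_of_span_image_eq {K V ι : Type*} [DivisionRing K] [AddCommGroup V]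
    [Module K V] [Fintype ι] [DecidableEq ι] {k : ℕ} (hk : 0 < k)
    (hkι : 2 * k ≤ Fintype.card ι) {v w : ι → V}
    (hv : ∀ T : Finset ι, T.card ≤ 2 * k → LinearIndepOn K v T)
    (π : {S : Finset ι // S.card = k} → {S : Finset ι // S.card = k})
    (hπ : ∀ S, span K (v '' S.1) = span K (w '' (π S).1)) :
    ∃ (σ : Equiv.Perm ι) (c : ι → K), (∀ i, c i ≠ 0) ∧ ∀ i, w i = c i • v (σ i) := by
  have hπinj := injective_of_span_image_eq hv hπ
  have hcover (u : ι) : ∃ S, u ∈ (π S).1 := by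
    obtain ⟨T, huT, -, hT⟩ := exists_subsuperset_card_eq (n := k) (subset_univ {u})
      (by rw [card_singleton]; omega) (by rw [card_univ]; omega)
    obtain ⟨S, hS⟩ := (Finite.injective_iff_surjective.1 hπinj) ⟨T, hT⟩
    exact ⟨S, hS ▸ huT (mem_singleton_self u)⟩
  have hw (u : ι) : w u ≠ 0 := by
    obtain ⟨S, hS⟩ := hcover u
    exact (linearIndepOn_image_of_span_image_eq hv hπ S).ne_zero hS
  have hnonempty (u : ι) : (preimageInter π u).Nonempty := by
    by_contra h
    have := mem_span_image_preimageInter hv hπ (hcover u)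
    rw [not_nonempty_iff_eq_empty.1 h, coe_empty, Set.image_empty, span_empty, mem_bot] at this
    exact hw u this
  have hdisj {u u' t : ι} (ht : t ∈ preimageInter π u) (ht' : t ∈ preimageInter π u') :
      u = u' :=
    eq_of_forall_mem_imp_mem hk (by omega) hπinj (mem_preimageInter.1 ht)
      (mem_preimageInter.1 ht')
  choose τ hτ using hnonempty
  have hτbij : Bijective τ :=
    Finite.injective_iff_bijective.1 fun u u' h ↦ hdisj (hτ u) (h ▸ hτ u')
  have hscalar (u : ι) : ∃ c : K, w u = c • v (τ u) := by
    have hsub : preimageInter π u ⊆ {τ u} := fun t ht ↦ by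
      obtain ⟨u', rfl⟩ := hτbij.2 t
      rw [hdisj ht (hτ u')]
      exact mem_singleton_self _
    have := span_mono (Set.image_mono (coe_subset.2 hsub))
      (mem_span_image_preimageInter hv hπ (hcover u))
    rw [coe_singleton, Set.image_singleton, mem_span_singleton] at this
    exact this.imp fun c hc ↦ hc.symm
  choose c hc using hscalar
  exact ⟨Equiv.ofBijective τ hτbij, c, fun u hc0 ↦ hw u (by rw [hc, hc0, zero_smul]), hc⟩

theorem stmt6_general (d m k : ℕ) (hk : 0 < k) (hkm : 2 * k ≤ m)
    (A A' : Matrix (Fin d) (Fin m) ℝ)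
    (hA : ∀ T : Finset (Fin m), T.card ≤ 2 * k →
      LinearIndependent ℝ (fun j : T => fun i => A i (j : Fin m)))
    (π : {S : Finset (Fin m) // S.card = k} → {S : Finset (Fin m) // S.card = k})
    (hπ : ∀ S : {S : Finset (Fin m) // S.card = k},
      Submodule.span ℝ ((fun j => fun i => A i j) '' (S.1 : Set (Fin m)))
        = Submodule.span ℝ ((fun j => fun i => A' i j) '' ((π S).1 : Set (Fin m)))) :
    ∃ (P : Equiv.Perm (Fin m)) (D : Fin m → ℝ), (∀ i, D i ≠ 0) ∧
      A' = A * ((Equiv.toPEquiv P).toMatrix : Matrix (Fin m) (Fin m) ℝ) * Matrix.diagonal D := by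
  obtain ⟨σ, c, hc, hcol⟩ :=
    exists_perm_smul_eq_of_span_image_eq hk (by simpa using hkm) hA π hπ
  refine ⟨σ.symm, c, hc, ?_⟩
  ext i j
  simp [PEquiv.mul_toMatrix_toPEquiv, congrFun (hcol j) i, mul_comm]

/-- Lemma 1 of [r4]: if `Spark(A) > 2k` and there is a map `π` on
`k`-element subsets of `{1,…,m}` with `span{A_S} = span{A'_{π(S)}}` for every such
subset `S`, then `A' = A P D` for a permutation matrix `P` and an invertible
diagonal matrix `D`. -/
theorem stmt6 (d m k : ℕ) (hd : 0 < d) (hm : 0 < m) (hk : 0 < k) (hkm : 2 * k ≤ m)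
    (A A' : Matrix (Fin d) (Fin m) ℝ)
    (hA : ∀ T : Finset (Fin m), T.card ≤ 2 * k →
      LinearIndependent ℝ (fun j : T => fun i => A i (j : Fin m)))
    (π : {S : Finset (Fin m) // S.card = k} → {S : Finset (Fin m) // S.card = k})
    (hπ : ∀ S : {S : Finset (Fin m) // S.card = k},
      Submodule.span ℝ ((fun j => fun i => A i j) '' (S.1 : Set (Fin m)))
        = Submodule.span ℝ ((fun j => fun i => A' i j) '' ((π S).1 : Set (Fin m)))) :
    ∃ (P : Equiv.Perm (Fin m)) (D : Fin m → ℝ), (∀ i, D i ≠ 0) ∧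
      A' = A * ((Equiv.toPEquiv P).toMatrix : Matrix (Fin m) (Fin m) ℝ) * Matrix.diagonal D :=
  stmt6_general d m k hk hkm A A' hA π hπ
end

section
/- Let d, m, k, p be positive integers with 2k ≤ p ≤ d and 2k ≤ m. Let A ∈ ℝ^{d×m} satisfy Spark(A) > 2k, and let Φ ∈ ℝ^{p×d} be a random matrix with i.i.d. N(0,1/d) entries. Then with probability one, for every subset T of {1,…,m} with |T| = 2k, the matrix Φ·A_T ∈ ℝ^{p×2k} has rank 2k; consequently, with probability one, any two vectors x, x'' ∈ ℝ^m each with at most k nonzero entries satisfying Φ A x = Φ A x'' must be equal. -/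
/-!
Fix a set `T` of `2k` columns and an injection `r : T ↪ Fin p`. The determinant of the square
block of `Φ A_T` formed by the rows `r` is a polynomial in the entries of `Φ`, and it is not the
zero polynomial: the columns of `A_T` are independent, so `A_T` has a left inverse, and putting it
into the rows `r` of `Φ` turns the block into the identity. A nonzero real polynomial vanishes
only on a null set of a finite product of measures absolutely continuous with respect to Lebesgue
measure (induction on the number of variables: Fubini, and a nonzero one-variable polynomial has
finitely many roots). There are finitely many `T`, so almost surely every such block is invertible
and `rank (Φ A_T) = 2k`. Then any `2k` columns of `Φ A` are independent, and two `k`-sparse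
solutions of `Φ A x = Φ A x''` differ by a `2k`-sparse vector of the kernel, which must vanish.
-/

open MeasureTheory ProbabilityTheory
open scoped NNReal ENNReal

namespace MvPolynomial

variable {μ : Measure ℝ}

theorem ae_eval_fin_ne_zero [SigmaFinite μ] (hμ : μ ≪ volume) :
    ∀ {n : ℕ} {q : MvPolynomial (Fin n) ℝ}, q ≠ 0 →
      ∀ᵐ x ∂Measure.pi (fun _ : Fin n => μ), eval x q ≠ 0
  | 0, q, hq => by
    obtain ⟨c, rfl⟩ := C_surjective (Fin 0) q
    exact .of_forall fun x => by simpa using hq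
  | n + 1, q, hq => by
    set e := MeasurableEquiv.piFinSuccAbove (fun _ : Fin (n + 1) => ℝ) 0
    set Q := finSuccEquiv ℝ n q
    have hQ : Q ≠ 0 := (EmbeddingLike.map_ne_zero_iff).2 hq
    have hmeas : MeasurableSet {z | eval (e.symm z) q ≠ 0} :=
      ((continuous_eval q).measurable.comp e.symm.measurable) (measurableSet_singleton 0).compl
    rw [← (measurePreserving_piFinSuccAbove (fun _ => μ) 0).symm.map_eq,
      e.symm.measurableEmbedding.ae_map_iff, Measure.ae_prod_iff_ae_ae hmeas,
      Measure.ae_ae_comm hmeas]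
    filter_upwards [ae_eval_fin_ne_zero hμ (Polynomial.leadingCoeff_ne_zero.2 hQ)] with s hs
    -- the specialization at `s` keeps its leading coefficient, so has finitely many roots
    have hQs : Q.map (eval s) ≠ 0 := fun h => hs <| by
      simpa only [Polynomial.coeff_map, Polynomial.coeff_zero, Polynomial.coeff_natDegree] using
        congrArg (Polynomial.coeff · Q.natDegree) h
    refine hμ.ae_le <| ((Polynomial.finite_setOfPred_isRoot hQs).countable.ae_notMem volume).mono
      fun y hy => ?_
    simp only [e, MeasurableEquiv.piFinSuccAbove_symm_apply, Fin.insertNthEquiv_zero]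
    change eval (Fin.cons y s) q ≠ 0
    rwa [eval_eq_eval_mv_eval']

theorem ae_eval_ne_zero [SigmaFinite μ] {σ : Type*} [Fintype σ] (hμ : μ ≪ volume)
    {q : MvPolynomial σ ℝ} (hq : q ≠ 0) :
    ∀ᵐ x ∂Measure.pi (fun _ : σ => μ), eval x q ≠ 0 := by
  set e := Fintype.equivFin σ
  rw [← (measurePreserving_piCongrLeft (fun _ : σ => μ) e.symm).map_eq,
    (MeasurableEquiv.piCongrLeft _ e.symm).measurableEmbedding.ae_map_iff]
  filter_upwards [ae_eval_fin_ne_zero hμ ((rename_injective e e.injective).ne hq)] with x hx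
  convert hx using 1
  rw [eval_rename]
  congr 2
  funext i
  simp [MeasurableEquiv.coe_piCongrLeft, Equiv.piCongrLeft_apply_eq_cast]

theorem ae_eval_uncurry_ne_zero {ι κ : Type*} [Fintype ι] [Fintype κ] [IsProbabilityMeasure μ]
    (hμ : μ ≪ volume) {q : MvPolynomial (ι × κ) ℝ} (hq : q ≠ 0) :
    ∀ᵐ Φ ∂Measure.pi (fun _ : ι => Measure.pi fun _ : κ => μ),
      eval (Function.uncurry Φ) q ≠ 0 := by
  simp_rw [← Measure.infinitePi_eq_pi]
  rw [← Measure.infinitePi_map_curry (fun _ _ => μ),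
    (MeasurableEquiv.curry ι κ ℝ).measurableEmbedding.ae_map_iff, Measure.infinitePi_eq_pi]
  simpa only [MeasurableEquiv.coe_curry, Function.uncurry_curry] using ae_eval_ne_zero hμ hq

end MvPolynomial

namespace Matrix

variable {ι κ n K : Type*} [Fintype κ] [Fintype n] [Field K]

theorem rank_eq_card_of_det_submatrix_ne_zero [DecidableEq n] {N : Matrix ι n K} {r : n → ι}
    (h : (N.submatrix r id).det ≠ 0) : N.rank = Fintype.card n :=
  le_antisymm N.rank_le_card_width <| calc
    Fintype.card n = (N.submatrix r id).rank :=
      (rank_of_isUnit _ ((isUnit_iff_isUnit_det _).2 h.isUnit)).symm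
    _ ≤ N.rank := rank_submatrix_le N r id

theorem linearIndependent_col_of_rank_eq_card {N : Matrix ι n K} (h : N.rank = Fintype.card n) :
    LinearIndependent K N.col :=
  linearIndependent_iff_card_eq_finrank_span.2 <| by
    rw [Set.finrank, ← rank_eq_finrank_span_cols, h]

theorem exists_det_submatrix_mul_ne_zero [DecidableEq n] {M : Matrix κ n K}
    (hM : LinearIndependent K M.col) {r : n → ι} (hr : r.Injective) :
    ∃ Φ₀ : ι → κ → K, ((of Φ₀ * M).submatrix r id).det ≠ 0 := by
  classical
  obtain ⟨g, hg⟩ := M.mulVecLin.exists_leftInverse_of_injective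
    (LinearMap.ker_eq_bot.2 (mulVec_injective_iff.2 hM))
  set B := LinearMap.toMatrix' g
  have hBM : B * M = 1 := by
    rw [← LinearMap.toMatrix'_toLin' M, toLin'_apply', ← LinearMap.toMatrix'_comp, hg,
      LinearMap.toMatrix'_id]
  refine ⟨Function.extend r B 0, ?_⟩
  have : (of (Function.extend r B 0) * M).submatrix r id = B * M := by
    ext a b
    rw [submatrix_apply, mul_apply, mul_apply]
    simp only [of_apply, id, hr.extend_apply B 0 a]
  simp [this, hBM]

theorem ae_det_submatrix_mul_ne_zero [Fintype ι] [DecidableEq n] {μ : Measure ℝ}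
    [IsProbabilityMeasure μ] (hμ : μ ≪ volume) (M : Matrix κ n ℝ) (r : n → ι)
    (h : ∃ Φ₀ : ι → κ → ℝ, ((of Φ₀ * M).submatrix r id).det ≠ 0) :
    ∀ᵐ Φ ∂Measure.pi (fun _ : ι => Measure.pi fun _ : κ => μ),
      ((of Φ * M).submatrix r id).det ≠ 0 := by
  obtain ⟨q, hq⟩ : ∃ q : MvPolynomial (ι × κ) ℝ, ∀ Φ,
      MvPolynomial.eval (Function.uncurry Φ) q = ((of Φ * M).submatrix r id).det := by
    refine ⟨(of fun a b => ∑ j, .X (r a, j) * .C (M j b)).det, fun Φ => ?_⟩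
    rw [RingHom.map_det, RingHom.mapMatrix_apply]
    congr 1
    ext a b
    simp [mul_apply]
  obtain ⟨Φ₀, hΦ₀⟩ := h
  have hq0 : q ≠ 0 := fun h0 => hΦ₀ (by rw [← hq, h0, map_zero])
  simpa only [hq] using MvPolynomial.ae_eval_uncurry_ne_zero hμ hq0

theorem ae_rank_mul_eq_card [Fintype ι] {μ : Measure ℝ} [IsProbabilityMeasure μ]
    (hμ : μ ≪ volume) {M : Matrix κ n ℝ} (hM : LinearIndependent ℝ M.col)
    (hn : Fintype.card n ≤ Fintype.card ι) :
    ∀ᵐ Φ ∂Measure.pi (fun _ : ι => Measure.pi fun _ : κ => μ),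
      (of Φ * M).rank = Fintype.card n := by
  classical
  obtain ⟨r⟩ := Function.Embedding.nonempty_of_card_le hn
  filter_upwards [ae_det_submatrix_mul_ne_zero hμ M r
    (exists_det_submatrix_mul_ne_zero hM r.injective)] with Φ hΦ
  exact rank_eq_card_of_det_submatrix_ne_zero hΦ

theorem eq_zero_of_mulVec_eq_zero_of_card_support_le [DecidableEq K] {B : Matrix ι κ K} {s : ℕ}
    (hs : s ≤ Fintype.card κ)
    (hB : ∀ T : Finset κ, T.card = s →
      LinearIndependent K (B.submatrix id ((↑) : T → κ)).col)
    {v : κ → K} (hv : (Finset.univ.filter fun i => v i ≠ 0).card ≤ s) (hBv : B *ᵥ v = 0) :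
    v = 0 := by
  obtain ⟨T, hvT, -, hT⟩ :=
    Finset.exists_subsuperset_card_eq (Finset.subset_univ _) hv (by simpa using hs)
  have hv_out : ∀ i ∉ T, v i = 0 := fun i hi => by_contra fun h => hi (hvT (by simpa using h))
  have hw : B.submatrix id ((↑) : T → κ) *ᵥ (fun j => v j) = 0 := by
    rw [← hBv]
    ext a
    change ∑ j : T, B a j * v j = ∑ i, B a i * v i
    exact (Finset.sum_coe_sort T fun i => B a i * v i).trans
      (Finset.sum_subset (Finset.subset_univ T) fun i _ hi => by simp [hv_out i hi])
  have hw0 := mulVec_injective_iff.2 (hB T hT) (hw.trans (mulVec_zero _).symm)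
  funext i
  by_cases hi : i ∈ T
  · exact congrFun hw0 ⟨i, hi⟩
  · exact hv_out i hi

theorem eq_of_mulVec_eq_of_card_support_le [DecidableEq K] {B : Matrix ι κ K} {k : ℕ}
    (hk : 2 * k ≤ Fintype.card κ)
    (hB : ∀ T : Finset κ, T.card = 2 * k →
      LinearIndependent K (B.submatrix id ((↑) : T → κ)).col)
    {x y : κ → K} (hx : (Finset.univ.filter fun i => x i ≠ 0).card ≤ k)
    (hy : (Finset.univ.filter fun i => y i ≠ 0).card ≤ k) (hxy : B *ᵥ x = B *ᵥ y) :
    x = y := by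
  classical
  have hsupp : (Finset.univ.filter fun i => (x - y) i ≠ 0) ⊆
      (Finset.univ.filter fun i => x i ≠ 0) ∪ Finset.univ.filter fun i => y i ≠ 0 := by
    intro i
    simp only [Finset.mem_filter, Finset.mem_univ, true_and, Finset.mem_union, Pi.sub_apply]
    contrapose!
    simp +contextual
  refine sub_eq_zero.1 (eq_zero_of_mulVec_eq_zero_of_card_support_le hk hB ?_ ?_)
  · exact (Finset.card_le_card hsupp).trans ((Finset.card_union_le _ _).trans (by omega))
  · rw [mulVec_sub, hxy, sub_self]

end Matrix

open Classical in
theorem stmt11_general (d m k p : ℕ) (hd : 0 < d)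
    (hkp : 2 * k ≤ p) (hkm : 2 * k ≤ m)
    (A : Matrix (Fin d) (Fin m) ℝ)
    (hA : ∀ T : Finset (Fin m), T.card ≤ 2 * k →
      LinearIndependent ℝ (fun j : T => fun i => A i (j : Fin m))) :
    (Measure.pi fun _ : Fin p => Measure.pi fun _ : Fin d => gaussianReal 0 (d : ℝ≥0)⁻¹)
      {Φ : Fin p → Fin d → ℝ |
        (∀ T : Finset (Fin m), T.card = 2 * k →
          ((Matrix.of Φ * A).submatrix id (fun j : T => (j : Fin m))).rank = 2 * k) ∧
        ∀ x x'' : Fin m → ℝ,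
          (Finset.univ.filter fun i => x i ≠ 0).card ≤ k →
          (Finset.univ.filter fun i => x'' i ≠ 0).card ≤ k →
          (Matrix.of Φ).mulVec (A.mulVec x) = (Matrix.of Φ).mulVec (A.mulVec x'') →
          x = x''} = 1 := by
  set ν := Measure.pi fun _ : Fin p => Measure.pi fun _ : Fin d =>
    gaussianReal 0 (d : ℝ≥0)⁻¹
  have hμ : gaussianReal 0 (d : ℝ≥0)⁻¹ ≪ volume :=
    gaussianReal_absolutelyContinuous 0 (inv_ne_zero (Nat.cast_ne_zero.2 hd.ne'))
  have hrank : ∀ᵐ Φ ∂ν, ∀ T : Finset (Fin m), T.card = 2 * k →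
      ((Matrix.of Φ * A).submatrix id (fun j : T => (j : Fin m))).rank = 2 * k := by
    refine ae_all_iff.2 fun T => ?_
    by_cases hT : T.card = 2 * k
    · filter_upwards [Matrix.ae_rank_mul_eq_card hμ (M := A.submatrix id ((↑) : T → Fin m))
        (hA T hT.le) (by simpa [hT] using hkp)] with Φ hΦ _
      rwa [Fintype.card_coe, hT] at hΦ
    · exact .of_forall fun _ h => absurd h hT
  refine (measure_congr (Filter.eventuallyEq_univ.2 ?_)).trans measure_univ
  filter_upwards [hrank] with Φ hΦ
  refine ⟨hΦ, fun x x'' hx hx'' h => ?_⟩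
  refine Matrix.eq_of_mulVec_eq_of_card_support_le (by simpa using hkm) (fun T hT => ?_)
    hx hx'' (by simpa only [Matrix.mulVec_mulVec] using h)
  exact Matrix.linearIndependent_col_of_rank_eq_card (by rw [hΦ T hT, Fintype.card_coe, hT])

open Classical in
/-- proof of Lemma 1, appendix: if `Spark(A) > 2k`, then with
probability one over a random `Φ ∈ ℝ^{p×d}` with i.i.d. `N(0,1/d)` entries, every
column submatrix `Φ·A_T` with `|T| = 2k` has full rank `2k`; consequently, any two
at-most-`k`-sparse vectors `x, x''` with `Φ A x = Φ A x''` coincide. -/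
theorem stmt11 (d m k p : ℕ) (hd : 0 < d) (hm : 0 < m) (hk : 0 < k) (hp : 0 < p)
    (hkp : 2 * k ≤ p) (hpd : p ≤ d) (hkm : 2 * k ≤ m)
    (A : Matrix (Fin d) (Fin m) ℝ)
    (hA : ∀ T : Finset (Fin m), T.card ≤ 2 * k →
      LinearIndependent ℝ (fun j : T => fun i => A i (j : Fin m))) :
    (Measure.pi fun _ : Fin p => Measure.pi fun _ : Fin d => gaussianReal 0 (d : ℝ≥0)⁻¹)
      {Φ : Fin p → Fin d → ℝ |
        (∀ T : Finset (Fin m), T.card = 2 * k →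
          ((Matrix.of Φ * A).submatrix id (fun j : T => (j : Fin m))).rank = 2 * k) ∧
        ∀ x x'' : Fin m → ℝ,
          (Finset.univ.filter fun i => x i ≠ 0).card ≤ k →
          (Finset.univ.filter fun i => x'' i ≠ 0).card ≤ k →
          (Matrix.of Φ).mulVec (A.mulVec x) = (Matrix.of Φ).mulVec (A.mulVec x'') →
          x = x''} = 1 :=
  stmt11_general d m k p hd hkp hkm A hA
end

section
/- Let R, ζ ∈ ℝ with 0 < ζ and ζ² < R². Suppose α ∈ [0,1] satisfies R² ≤ α²·R² + 2·α·√(1−α²)·ζ + (1−α²)·ζ². Then α ≥ (R² − ζ²)/√(4ζ² + (R² − ζ²)²). -/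
/-- eigengap analysis, range of `α`: if `0 < ζ`, `ζ² < R²`,
`α ∈ [0,1]` and `R² ≤ α²R² + 2α√(1−α²)ζ + (1−α²)ζ²`, then
`α ≥ (R² − ζ²)/√(4ζ² + (R² − ζ²)²)`. -/
theorem stmt16 (R ζ α : ℝ) (hζ : 0 < ζ) (hζR : ζ ^ 2 < R ^ 2)
    (hα0 : 0 ≤ α) (hα1 : α ≤ 1)
    (h : R ^ 2 ≤ α ^ 2 * R ^ 2 + 2 * α * Real.sqrt (1 - α ^ 2) * ζ
      + (1 - α ^ 2) * ζ ^ 2) :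
    (R ^ 2 - ζ ^ 2) / Real.sqrt (4 * ζ ^ 2 + (R ^ 2 - ζ ^ 2) ^ 2) ≤ α := by
  set D := R ^ 2 - ζ ^ 2 with hDdef
  have hD : 0 < D := by linarith
  set s := Real.sqrt (1 - α ^ 2) with hsdef
  have hs0 : 0 ≤ s := Real.sqrt_nonneg _
  have hs2 : s ^ 2 = 1 - α ^ 2 := by
    rw [hsdef, Real.sq_sqrt]; nlinarith
  have key : s * D ≤ 2 * α * ζ := by
    have h1 : s ^ 2 * D ≤ 2 * α * s * ζ := by nlinarith
    rcases eq_or_lt_of_le hs0 with hs | hs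
    · nlinarith
    · nlinarith [mul_pos hs hD]
  have hX : 0 < 4 * ζ ^ 2 + D ^ 2 := by positivity
  have hsq : Real.sqrt (4 * ζ ^ 2 + D ^ 2) ^ 2 = 4 * ζ ^ 2 + D ^ 2 :=
    Real.sq_sqrt hX.le
  have hsqpos : 0 < Real.sqrt (4 * ζ ^ 2 + D ^ 2) := Real.sqrt_pos.mpr hX
  have h2 : s * D * (s * D) ≤ 2 * α * ζ * (2 * α * ζ) :=
    mul_le_mul key key (mul_nonneg hs0 hD.le) (by positivity)
  have h3 : D ^ 2 ≤ α ^ 2 * (4 * ζ ^ 2 + D ^ 2) := by nlinarith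
  rw [div_le_iff₀ hsqpos]
  nlinarith [mul_nonneg hα0 hsqpos.le]
end
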